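/- Let V be a finite-dimensional real vector space and L ⊆ V the ℤ-span of an ℝ-basis of V (a full lattice). Then: (a) for integral cones κ ⊆ σ in L, the convex hull satisfies conv(σ − κ) = conv(σ) − conv(κ); in particular, the convex hull of any coface of σ is a coface of the real cone conv(σ); (b) if ν is a face of a real cone μ in V, then ν ∩ L is a face of the integral cone μ ∩ L. -/

import Mathlib

open Pointwise

/-- An integral cone: a subset containing `0` and closed under addition. -/
def IsCone {L : Type*} [AddCommMonoid L] (σ : Set L) : Prop :=
  0 ∈ σ ∧ ∀ a ∈ σ, ∀ b ∈ σ, a + b ∈ σ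

/-- A face of a cone `σ`: a nonempty subset `τ ⊆ σ` such that for `a, b ∈ σ`,
`a + b ∈ τ` if and only if `a ∈ τ` and `b ∈ τ`. -/
def IsFace {L : Type*} [AddCommMonoid L] (σ τ : Set L) : Prop :=
  τ.Nonempty ∧ τ ⊆ σ ∧ ∀ a ∈ σ, ∀ b ∈ σ, (a + b ∈ τ ↔ a ∈ τ ∧ b ∈ τ)

/-- A real cone in a real vector space: contains `0`, closed under addition
and under multiplication by nonnegative scalars. -/
def IsRealCone {V : Type*} [AddCommGroup V] [Module ℝ V] (μ : Set V) : Prop :=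
  0 ∈ μ ∧ (∀ a ∈ μ, ∀ b ∈ μ, a + b ∈ μ) ∧ ∀ r : ℝ, 0 ≤ r → ∀ x ∈ μ, r • x ∈ μ

/-! Part (a) is Minkowski additivity of convex hulls, the coface being cut out by the hull of
`κ`, a real cone since it is convex, contains `0` and is closed under `ℕ`-multiples. Part (b)
only uses that the lattice is an additive submonoid. -/

def IsCone.toAddSubmonoid {L : Type*} [AddCommMonoid L] {σ : Set L} (hσ : IsCone σ) :
    AddSubmonoid L where
  carrier := σ
  add_mem' ha hb := hσ.2 _ ha _ hb
  zero_mem' := hσ.1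

theorem IsCone.isCone_convexHull {𝕜 E : Type*} [Field 𝕜] [LinearOrder 𝕜] [IsStrictOrderedRing 𝕜]
    [AddCommGroup E] [Module 𝕜 E] {κ : Set E} (hκ : IsCone κ) : IsCone (convexHull 𝕜 κ) := by
  refine ⟨subset_convexHull 𝕜 κ hκ.1, fun x hx y hy => ?_⟩
  have hxy : x + y ∈ convexHull 𝕜 (κ + κ) := by
    rw [convexHull_add]
    exact Set.add_mem_add hx hy
  exact convexHull_mono (Set.add_subset_iff.2 hκ.2) hxy

theorem IsCone.isRealCone_convexHull {V : Type*} [AddCommGroup V] [Module ℝ V] {κ : Set V}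
    (hκ : IsCone κ) : IsRealCone (convexHull ℝ κ) := by
  have hcone := hκ.isCone_convexHull (𝕜 := ℝ)
  refine ⟨hcone.1, hcone.2, fun r hr x hx => ?_⟩
  obtain ⟨n, hrn⟩ := exists_nat_gt r
  have hn : (0 : ℝ) < n := hr.trans_lt hrn
  have hnx : (n : ℝ) • x ∈ convexHull ℝ κ := by
    rw [Nat.cast_smul_eq_nsmul]
    exact nsmul_mem (S := hcone.toAddSubmonoid) hx n
  have hscale : r / n ∈ Set.Icc (0 : ℝ) 1 :=
    ⟨div_nonneg hr hn.le, (div_le_one hn).2 hrn.le⟩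
  have hrx : (r / n) • ((n : ℝ) • x) = r • x := by
    rw [smul_smul, div_mul_cancel₀ r hn.ne']
  exact hrx ▸ (convex_convexHull ℝ κ).smul_mem_of_zero_mem hcone.1 hnx hscale

section Face

variable {L : Type*} [AddCommMonoid L] {μ ν : Set L}

theorem IsFace.zero_mem (hν : IsFace μ ν) (hμ : 0 ∈ μ) : 0 ∈ ν := by
  obtain ⟨x, hx⟩ := hν.1
  exact ((hν.2.2 0 hμ x (hν.2.1 hx)).1 (by rwa [zero_add])).1

theorem IsFace.inter_addSubmonoid (hν : IsFace μ ν) (hμ : 0 ∈ μ) (S : AddSubmonoid L) :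
    IsFace (μ ∩ S) (ν ∩ S) := by
  refine ⟨⟨0, hν.zero_mem hμ, S.zero_mem⟩, Set.inter_subset_inter_left _ hν.2.1, ?_⟩
  rintro a ⟨haμ, haS⟩ c ⟨hcμ, hcS⟩
  rw [Set.mem_inter_iff, hν.2.2 a haμ c hcμ]
  exact ⟨fun ⟨⟨haν, hcν⟩, _⟩ => ⟨⟨haν, haS⟩, hcν, hcS⟩,
    fun ⟨⟨haν, _⟩, hcν, _⟩ => ⟨⟨haν, hcν⟩, S.add_mem haS hcS⟩⟩

end Face

theorem stmt15_general
    {V : Type*} [AddCommGroup V] [Module ℝ V]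
    {ι : Type*} (b : Module.Basis ι ℝ V)
    (Lset : Set V) (hL : Lset = (Submodule.span ℤ (Set.range ⇑b) : Set V)) :
    -- (a)
    (∀ σ κ : Set V, σ ⊆ Lset → IsCone σ → IsCone κ → κ ⊆ σ →
      convexHull ℝ (σ - κ) = convexHull ℝ σ - convexHull ℝ κ ∧
      ∃ ν : Set V, IsRealCone ν ∧ ν ⊆ convexHull ℝ σ ∧
        convexHull ℝ (σ - κ) = convexHull ℝ σ - ν) ∧
    -- (b)
    (∀ μ ν : Set V, IsRealCone μ → IsFace μ ν →
      IsFace (μ ∩ Lset) (ν ∩ Lset)) := by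
  subst hL
  refine ⟨fun σ κ _ _ hκ hκσ => ?_, fun μ ν hμ hν => ?_⟩
  · exact ⟨convexHull_sub σ κ, convexHull ℝ κ, IsCone.isRealCone_convexHull hκ,
      convexHull_mono hκσ, convexHull_sub σ κ⟩
  · exact hν.inter_addSubmonoid hμ.1 (Submodule.span ℤ (Set.range b)).toAddSubmonoid

/-- (a) convex hulls commute with localisation of integral
cones, so hulls of cofaces are cofaces of the hull; (b) intersecting with the
lattice takes faces of real cones to faces of integral cones. -/
theorem stmt15
    {V : Type*} [AddCommGroup V] [Module ℝ V] [FiniteDimensional ℝ V]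
    {ι : Type*} [Fintype ι] (b : Module.Basis ι ℝ V)
    (Lset : Set V) (hL : Lset = (Submodule.span ℤ (Set.range ⇑b) : Set V)) :
    -- (a)
    (∀ σ κ : Set V, σ ⊆ Lset → IsCone σ → IsCone κ → κ ⊆ σ →
      convexHull ℝ (σ - κ) = convexHull ℝ σ - convexHull ℝ κ ∧
      ∃ ν : Set V, IsRealCone ν ∧ ν ⊆ convexHull ℝ σ ∧
        convexHull ℝ (σ - κ) = convexHull ℝ σ - ν) ∧
    -- (b)
    (∀ μ ν : Set V, IsRealCone μ → IsFace μ ν →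
      IsFace (μ ∩ Lset) (ν ∩ Lset)) :=
  stmt15_general b Lset hL
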